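/- Let G be a finite simple graph on a finite vertex set V and let i, j ∈ V with i ≠ j. Then the graph state |G⟩ satisfies ⟨G| Π_{ij} |G⟩ = 1/2, where Π_{ij} is the orthogonal projection on (ℂ²)^{⊗V} acting as |00⟩⟨00| + |11⟩⟨11| on the pair of qubits (i, j) and as the identity on all other qubits. Consequently, for all θ₁, θ₂ ∈ ℝ, ⟨G| (Z(θ₁)⊗Z(θ₂))†_{ij} Π_{ij} (Z(θ₁)⊗Z(θ₂))_{ij} |G⟩ = 1/2; that is, a fusion measurement with green failure (whose success POVM element on qubits i, j is (Z(θ₁)⊗Z(θ₂))† Π (Z(θ₁)⊗Z(θ₂))) succeeds with probability exactly 1/2 whenever its two inputs are unmeasured qubits of a graph state. -/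
import Mathlib


open Complex

/-- The sign `(-1)^(x u * x w)` contributed by a `CZ` gate on the edge `{u, w}`,
applied to the computational-basis state indexed by `x`. -/
noncomputable def czSign {V : Type*} (x : V → Fin 2) : Sym2 V → ℂ :=
  Sym2.lift ⟨fun u w => (-1 : ℂ) ^ ((x u : ℕ) * (x w : ℕ)),
    fun u w => by simp [Nat.mul_comm]⟩

/-- The amplitude of the graph state `|G⟩ = (∏_{{u,w} ∈ E} CZ_{uw}) |+⟩^{⊗V}` on the
computational-basis state indexed by `x : V → Fin 2`. -/
noncomputable def graphStateAmp {V : Type*} [Fintype V] [DecidableEq V]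
    (G : SimpleGraph V) [DecidableRel G.Adj] (x : V → Fin 2) : ℂ :=
  ((Real.sqrt 2 : ℂ))⁻¹ ^ Fintype.card V * ∏ e ∈ G.edgeFinset, czSign x e

lemma czSign_sq {V : Type*} (x : V → Fin 2) (e : Sym2 V) :
    (starRingEnd ℂ) (czSign x e) * czSign x e = 1 := by
  induction e using Sym2.ind with
  | _ u w =>
    simp only [czSign, Sym2.lift_mk]
    rw [map_pow, map_neg, map_one, ← pow_add, ← two_mul, pow_mul]
    norm_num

lemma amp_sq {V : Type*} [Fintype V] [DecidableEq V]
    (G : SimpleGraph V) [DecidableRel G.Adj] (x : V → Fin 2) :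
    (starRingEnd ℂ) (graphStateAmp G x) * graphStateAmp G x
      = (2 : ℂ)⁻¹ ^ Fintype.card V := by
  have h2 : ((Real.sqrt 2 : ℝ) : ℂ)⁻¹ * ((Real.sqrt 2 : ℝ) : ℂ)⁻¹ = (2 : ℂ)⁻¹ := by
    rw [← mul_inv, ← Complex.ofReal_mul, Real.mul_self_sqrt (by norm_num)]
    norm_num
  unfold graphStateAmp
  rw [map_mul, map_pow, map_inv₀, Complex.conj_ofReal, map_prod,
    mul_mul_mul_comm, ← mul_pow, ← Finset.prod_mul_distrib, h2,
    Finset.prod_congr rfl (fun e _ => czSign_sq x e), Finset.prod_const_one, mul_one]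

lemma phase_sq (θ : ℝ) (k : ℕ) :
    (starRingEnd ℂ) (Complex.exp ((θ : ℂ) * Complex.I * (k : ℂ))) *
      Complex.exp ((θ : ℂ) * Complex.I * (k : ℂ)) = 1 := by
  have hconj : (starRingEnd ℂ) ((θ : ℂ) * Complex.I * (k : ℂ))
      = -((θ : ℂ) * Complex.I * (k : ℂ)) := by
    simp [map_mul, Complex.conj_ofReal, Complex.conj_I]
  rw [← Complex.exp_conj, hconj, Complex.exp_neg,
    inv_mul_cancel₀ (Complex.exp_ne_zero _)]

lemma sum_ite_half {V : Type*} [Fintype V] [DecidableEq V]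
    (i j : V) (hij : i ≠ j) (c : ℂ) :
    (∑ x : V → Fin 2, if x i = x j then c else 0)
      = 2 ^ Fintype.card V * c / 2 := by
  set f : (V → Fin 2) → (V → Fin 2) := fun x => Function.update x i (x i + 1) with hf
  have hadd : ∀ a : Fin 2, a + 1 + 1 = a := by decide
  have hiff : ∀ a b : Fin 2, (a + 1 = b) ↔ ¬(a = b) := by decide
  have hinv : Function.Involutive f := by
    intro x
    funext v
    by_cases hv : v = i
    · subst hv
      simp [hf, Function.update_self, hadd]
    · simp [hf, Function.update_of_ne hv]
  have hfi : ∀ x : V → Fin 2, f x i = x i + 1 := fun x => Function.update_self _ _ _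
  have hfj : ∀ x : V → Fin 2, f x j = x j := fun x =>
    Function.update_of_ne (fun h => hij h.symm) _ _
  have hre : (∑ x : V → Fin 2, if x i = x j then c else 0)
      = ∑ x : V → Fin 2, if ¬(x i = x j) then c else 0 := by
    rw [← Equiv.sum_comp (Function.Involutive.toPerm f hinv) (fun x => if x i = x j then c else 0)]
    refine Finset.sum_congr rfl fun x _ => ?_
    have : (Function.Involutive.toPerm f hinv) x = f x := rfl
    rw [this, hfi, hfj, if_congr (hiff _ _) rfl rfl]
  have hsum : (∑ x : V → Fin 2, if x i = x j then c else 0)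
      + (∑ x : V → Fin 2, if x i = x j then c else 0)
      = (2 : ℂ) ^ Fintype.card V * c := by
    nth_rewrite 2 [hre]
    rw [← Finset.sum_add_distrib]
    have : ∀ x : V → Fin 2,
        ((if x i = x j then c else 0) + if ¬(x i = x j) then c else 0) = c := by
      intro x; by_cases h : x i = x j <;> simp [h]
    rw [Finset.sum_congr rfl fun x _ => this x, Finset.sum_const, Finset.card_univ,
      Fintype.card_fun, Fintype.card_fin, nsmul_eq_mul, Nat.cast_pow, Nat.cast_ofNat]
  linear_combination hsum / 2

/-- A fusion measurement with green failure, whose success POVM element on qubits `i, j` is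
`(Z(θ₁)⊗Z(θ₂))† Π_{ij} (Z(θ₁)⊗Z(θ₂))` with `Π_{ij} = |00⟩⟨00| + |11⟩⟨11|` on qubits `i, j`,
succeeds with probability exactly `1/2` whenever its two inputs are (unmeasured) qubits of a
graph state.  The first conjunct is `⟨G| Π_{ij} |G⟩ = 1/2`
(the projection `Π_{ij}` is diagonal, so the expectation is the sum over basis states with
`x i = x j` of the squared moduli of the amplitudes); the second conjunct is the same
computation with the local phases `Z(θ₁), Z(θ₂)` applied to qubits `i, j` of `|G⟩`. -/
theorem green_fusion_on_graph_state_succeeds_with_probability_half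
    {V : Type*} [Fintype V] [DecidableEq V]
    (G : SimpleGraph V) [DecidableRel G.Adj] (i j : V) (hij : i ≠ j) (θ₁ θ₂ : ℝ) :
    (∑ x : V → Fin 2, if x i = x j then
        (starRingEnd ℂ) (graphStateAmp G x) * graphStateAmp G x else 0) = 1 / 2 ∧
    (∑ x : V → Fin 2, if x i = x j then
        (starRingEnd ℂ) (Complex.exp (θ₁ * Complex.I * ((x i : ℕ) : ℂ)) *
            Complex.exp (θ₂ * Complex.I * ((x j : ℕ) : ℂ)) * graphStateAmp G x) *
          (Complex.exp (θ₁ * Complex.I * ((x i : ℕ) : ℂ)) *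
            Complex.exp (θ₂ * Complex.I * ((x j : ℕ) : ℂ)) * graphStateAmp G x)
      else 0) = 1 / 2 := by
  have hfinal : (2 : ℂ) ^ Fintype.card V * (2 : ℂ)⁻¹ ^ Fintype.card V / 2 = 1 / 2 := by
    rw [← mul_pow, mul_inv_cancel₀ (two_ne_zero), one_pow]
  constructor
  · rw [Finset.sum_congr rfl fun x _ => if_congr Iff.rfl (amp_sq G x) rfl,
      sum_ite_half i j hij, hfinal]
  · have hterm : ∀ x : V → Fin 2,
        (starRingEnd ℂ) (Complex.exp (θ₁ * Complex.I * ((x i : ℕ) : ℂ)) *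
            Complex.exp (θ₂ * Complex.I * ((x j : ℕ) : ℂ)) * graphStateAmp G x) *
          (Complex.exp (θ₁ * Complex.I * ((x i : ℕ) : ℂ)) *
            Complex.exp (θ₂ * Complex.I * ((x j : ℕ) : ℂ)) * graphStateAmp G x)
          = (2 : ℂ)⁻¹ ^ Fintype.card V := by
      intro x
      rw [map_mul, map_mul]
      calc (starRingEnd ℂ) (Complex.exp (θ₁ * Complex.I * ((x i : ℕ) : ℂ))) *
            (starRingEnd ℂ) (Complex.exp (θ₂ * Complex.I * ((x j : ℕ) : ℂ))) *
            (starRingEnd ℂ) (graphStateAmp G x) *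
            (Complex.exp (θ₁ * Complex.I * ((x i : ℕ) : ℂ)) *
              Complex.exp (θ₂ * Complex.I * ((x j : ℕ) : ℂ)) * graphStateAmp G x)
          = ((starRingEnd ℂ) (Complex.exp (θ₁ * Complex.I * ((x i : ℕ) : ℂ))) *
              Complex.exp (θ₁ * Complex.I * ((x i : ℕ) : ℂ))) *
            ((starRingEnd ℂ) (Complex.exp (θ₂ * Complex.I * ((x j : ℕ) : ℂ))) *
              Complex.exp (θ₂ * Complex.I * ((x j : ℕ) : ℂ))) *
            ((starRingEnd ℂ) (graphStateAmp G x) * graphStateAmp G x) := by ring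
        _ = (2 : ℂ)⁻¹ ^ Fintype.card V := by
            rw [phase_sq θ₁, phase_sq θ₂, amp_sq G x, one_mul, one_mul]
    rw [Finset.sum_congr rfl fun x _ => if_congr Iff.rfl (hterm x) rfl,
      sum_ite_half i j hij, hfinal]
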